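/- For every integer b ≥ 2, one has |[3, b, 2*7, 3, 2*(b−2)]| = 27b² − 36b + 4, i.e. the Hirzebruch–Jung numerator of the list 3, b, seven 2's, 3, followed by b−2 twos equals 27b² − 36b + 4 (the order of the unique singularity of the surface S(b) of Theorem 1.4). -/

import Mathlib

/-- Hirzebruch–Jung numerator: |[]| = 1, |[n]| = n,
|[n₁, n₂, …]| = n₁·|[n₂, …]| − |[n₃, …]|. -/
def hj : List ℤ → ℤ
  | [] => 1
  | [n] => n
  | n :: m :: l => n * hj (m :: l) - hj l

/-! A block of `k` twos has numerator `k + 1`, so a tail `a, 2, …, 2` has numerator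
`a (k + 1) - k`, linear in `k = b - 2`; the recurrence then unwinds the fixed prefix
`3, b, 2, …, 2` into a polynomial in `b`. -/

lemma hj_cons_cons (n m : ℤ) (l : List ℤ) :
    hj (n :: m :: l) = n * hj (m :: l) - hj l := rfl

lemma hj_replicate_two : ∀ k : ℕ, hj (List.replicate k 2) = k + 1
  | 0 => rfl
  | 1 => rfl
  | k + 2 => by
    rw [List.replicate_succ, List.replicate_succ, hj_cons_cons, ← List.replicate_succ,
      hj_replicate_two (k + 1), hj_replicate_two k]
    push_cast
    ring

lemma hj_cons_replicate_two (a : ℤ) : ∀ k : ℕ, hj (a :: List.replicate k 2) = a * (k + 1) - k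
  | 0 => by simp [hj]
  | k + 1 => by
    rw [List.replicate_succ, hj_cons_cons, ← List.replicate_succ, hj_replicate_two,
      hj_replicate_two]
    push_cast
    ring

theorem hj_order_Sb (b : ℤ) (hb : 2 ≤ b) :
    hj ([3, b] ++ List.replicate 7 2 ++ [3] ++ List.replicate (b - 2).toNat 2) =
      27 * b ^ 2 - 36 * b + 4 := by
  set k := (b - 2).toNat
  have hk : (k : ℤ) = b - 2 := Int.toNat_of_nonneg (by omega)
  have hlist : [3, b] ++ List.replicate 7 2 ++ [3] ++ List.replicate k 2 =
      3 :: b :: 2 :: 2 :: 2 :: 2 :: 2 :: 2 :: 2 :: 3 :: List.replicate k 2 := rfl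
  rw [hlist]
  simp only [hj_cons_cons, hj_cons_replicate_two, hj_replicate_two, hk]
  ring
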